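/- arXiv:1709.08266 — 2 statements merged into one kernel-verified Lean document; each statement's English description precedes it below -/
import Mathlib

section
/- Pointwise lower bound on the collision operator: for every nonnegative f ∈ L¹(ℝ^d) with 𝔐₀[f] > 0 and every k ∈ ℝ^d, the loss term satisfies Q_loss[f](k) ≤ 4|k| f(k), and consequently Q[f](k) = Q_gain[f](k) − Q_loss[f](k) ≥ −4|k| f(k). -/
noncomputable section
open MeasureTheory Filter Set Real

abbrev Sp (d : ℕ) : Type := EuclideanSpace ℝ (Fin d)

/-- Dispersion relation ω_k = √(λ1 + λ2 |k|²). -/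
def omg (l1 l2 : ℝ) {d : ℕ} (k : Sp d) : ℝ := Real.sqrt (l1 + l2 * ‖k‖ ^ 2)

/-- Zeroth moment 𝔐₀[f] = ∫ f. -/
def M0 {d : ℕ} (f : Sp d → ℝ) : ℝ := ∫ k, f k

/-- Resonance broadening Γ_{k,k1,k2}[f]. -/
def Gam {d : ℕ} (f : Sp d → ℝ) (k k1 k2 : Sp d) : ℝ :=
  (‖k‖ ^ 2 + ‖k1‖ ^ 2 + ‖k2‖ ^ 2) * M0 f

/-- Lorentzian L_f(ζ; k,k1,k2) = Γ/(ζ² + Γ²). -/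
def Lor {d : ℕ} (f : Sp d → ℝ) (z : ℝ) (k k1 k2 : Sp d) : ℝ :=
  Gam f k k1 k2 / (z ^ 2 + Gam f k k1 k2 ^ 2)

/-- Collision kernel |V_{k,k1,k2}|² = |k||k1||k2|. -/
def Vsq {d : ℕ} (k k1 k2 : Sp d) : ℝ := ‖k‖ * ‖k1‖ * ‖k2‖

/-- Collision operator Q[f] after eliminating the Dirac delta enforcing k = k1 + k2. -/
def Qop (l1 l2 : ℝ) {d : ℕ} (f : Sp d → ℝ) (k : Sp d) : ℝ :=
  (∫ k1, Vsq k k1 (k - k1) *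
      Lor f (omg l1 l2 k - omg l1 l2 k1 - omg l1 l2 (k - k1)) k k1 (k - k1) *
      (f k1 * f (k - k1) - f k * f k1 - f k * f (k - k1)))
  - 2 * ∫ k2, Vsq (k + k2) k k2 *
      Lor f (omg l1 l2 (k + k2) - omg l1 l2 k - omg l1 l2 k2) (k + k2) k k2 *
      (f k * f k2 - f k * f (k + k2) - f (k + k2) * f k2)

/-- Weighted L¹ norm ‖g‖_{L¹_N} = ∫ |g| ω^N. -/
def wnorm (l1 l2 N : ℝ) {d : ℕ} (g : Sp d → ℝ) : ℝ := ∫ k, |g k| * omg l1 l2 k ^ N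

/-- N-th moment 𝔐_N[g] = ∫ ω^N g. -/
def Mom (l1 l2 N : ℝ) {d : ℕ} (g : Sp d → ℝ) : ℝ := ∫ k, omg l1 l2 k ^ N * g k

/-- Gain part of the collision operator (after eliminating the Dirac delta). -/
def Qgain (l1 l2 : ℝ) {d : ℕ} (g : Sp d → ℝ) (k : Sp d) : ℝ :=
  (∫ k1, Vsq k k1 (k - k1) *
      Lor g (omg l1 l2 k - omg l1 l2 k1 - omg l1 l2 (k - k1)) k k1 (k - k1) *
      (g k1 * g (k - k1)))
  + 2 * ∫ k2, Vsq (k + k2) k k2 *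
      Lor g (omg l1 l2 (k + k2) - omg l1 l2 k - omg l1 l2 k2) (k + k2) k k2 *
      (g k * g (k + k2) + g (k + k2) * g k2)

/-- Collision frequency ϑ[f]. -/
def vartheta (l1 l2 : ℝ) {d : ℕ} (f : Sp d → ℝ) (k : Sp d) : ℝ :=
  2 * (∫ k1, Vsq k k1 (k - k1) *
      Lor f (omg l1 l2 k - omg l1 l2 k1 - omg l1 l2 (k - k1)) k k1 (k - k1) * f k1)
  + 2 * ∫ k2, Vsq (k + k2) k k2 *
      Lor f (omg l1 l2 (k + k2) - omg l1 l2 k - omg l1 l2 k2) (k + k2) k k2 * f k2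

/-- Loss part of the collision operator: Q_loss[f] = f·ϑ[f]. -/
def Qloss (l1 l2 : ℝ) {d : ℕ} (f : Sp d → ℝ) (k : Sp d) : ℝ := f k * vartheta l1 l2 f k

lemma key_lorentz (M : ℝ) (hM : 0 < M) (a b c z : ℝ) (ha : 0 ≤ a) (hb : 0 ≤ b) (hc : 0 ≤ c) :
    a * b * c * (((a ^ 2 + b ^ 2 + c ^ 2) * M) /
      (z ^ 2 + ((a ^ 2 + b ^ 2 + c ^ 2) * M) ^ 2)) ≤ a / (2 * M) := by
  rcases eq_or_lt_of_le (by positivity : (0:ℝ) ≤ a ^ 2 + b ^ 2 + c ^ 2) with h | h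
  · have ha0 : a = 0 := by nlinarith [sq_nonneg a, sq_nonneg b, sq_nonneg c]
    simp [ha0]
  · set G : ℝ := (a ^ 2 + b ^ 2 + c ^ 2) * M with hG
    have hGpos : 0 < G := mul_pos h hM
    have hL : G / (z ^ 2 + G ^ 2) ≤ 1 / G := by
      rw [div_le_div_iff₀ (by positivity) hGpos]
      nlinarith [sq_nonneg z]
    have h1 : a * b * c * (G / (z ^ 2 + G ^ 2)) ≤ a * b * c * (1 / G) :=
      mul_le_mul_of_nonneg_left hL (by positivity)
    refine h1.trans ?_
    rw [mul_one_div, hG, div_le_div_iff₀ (by positivity) (by positivity)]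
    nlinarith [mul_nonneg (mul_nonneg ha hM.le) (sq_nonneg (b - c)), sq_nonneg a,
      mul_nonneg (mul_nonneg ha hM.le) (sq_nonneg a)]

lemma key_lorentz' (M : ℝ) (hM : 0 < M) (a b c z : ℝ) (ha : 0 ≤ a) (hb : 0 ≤ b) (hc : 0 ≤ c) :
    a * b * c * (((a ^ 2 + b ^ 2 + c ^ 2) * M) /
      (z ^ 2 + ((a ^ 2 + b ^ 2 + c ^ 2) * M) ^ 2)) ≤ b / (2 * M) := by
  have h := key_lorentz M hM b a c z hb ha hc
  have e : a * b * c * (((a ^ 2 + b ^ 2 + c ^ 2) * M) /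
      (z ^ 2 + ((a ^ 2 + b ^ 2 + c ^ 2) * M) ^ 2))
      = b * a * c * (((b ^ 2 + a ^ 2 + c ^ 2) * M) /
      (z ^ 2 + ((b ^ 2 + a ^ 2 + c ^ 2) * M) ^ 2)) := by ring
  rw [e]; exact h

/-- Pointwise lower bound on the collision operator: for nonnegative
integrable f with 𝔐₀[f] > 0 and any k (with all the collision integrands integrable),
Q_loss[f](k) ≤ 4|k|f(k), and consequently Q[f](k) = Q_gain[f](k) − Q_loss[f](k) ≥ −4|k|f(k). -/
theorem collision_pointwise_lower_bound {d : ℕ} (hd : 2 ≤ d) (l1 l2 : ℝ) (hl1 : 0 < l1)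
    (hl2 : 0 < l2) (f : Sp d → ℝ) (hf : ∀ k, 0 ≤ f k) (hfi : Integrable f)
    (hM : 0 < M0 f) (k : Sp d)
    (hint1 : Integrable (fun k1 : Sp d => Vsq k k1 (k - k1) *
      Lor f (omg l1 l2 k - omg l1 l2 k1 - omg l1 l2 (k - k1)) k k1 (k - k1) *
      (f k1 * f (k - k1))))
    (hint2 : Integrable (fun k1 : Sp d => Vsq k k1 (k - k1) *
      Lor f (omg l1 l2 k - omg l1 l2 k1 - omg l1 l2 (k - k1)) k k1 (k - k1) *
      (f k * f k1)))
    (hint3 : Integrable (fun k1 : Sp d => Vsq k k1 (k - k1) *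
      Lor f (omg l1 l2 k - omg l1 l2 k1 - omg l1 l2 (k - k1)) k k1 (k - k1) *
      (f k * f (k - k1))))
    (hint4 : Integrable (fun k2 : Sp d => Vsq (k + k2) k k2 *
      Lor f (omg l1 l2 (k + k2) - omg l1 l2 k - omg l1 l2 k2) (k + k2) k k2 *
      (f k * f k2)))
    (hint5 : Integrable (fun k2 : Sp d => Vsq (k + k2) k k2 *
      Lor f (omg l1 l2 (k + k2) - omg l1 l2 k - omg l1 l2 k2) (k + k2) k k2 *
      (f k * f (k + k2))))
    (hint6 : Integrable (fun k2 : Sp d => Vsq (k + k2) k k2 *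
      Lor f (omg l1 l2 (k + k2) - omg l1 l2 k - omg l1 l2 k2) (k + k2) k k2 *
      (f (k + k2) * f k2))) :
    Qloss l1 l2 f k ≤ 4 * ‖k‖ * f k ∧
      Qop l1 l2 f k = Qgain l1 l2 f k - Qloss l1 l2 f k ∧
      -(4 * ‖k‖ * f k) ≤ Qop l1 l2 f k := by
  have hVnn : ∀ a b c : Sp d, 0 ≤ Vsq a b c := by
    intro a b c; unfold Vsq; positivity
  have hLnn : ∀ (z : ℝ) (a b c : Sp d), 0 ≤ Lor f z a b c := by
    intro z a b c
    exact div_nonneg (mul_nonneg (by positivity) hM.le) (by positivity)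
  -- pointwise bounds on the kernels
  have hbound1 : ∀ k1 : Sp d,
      Vsq k k1 (k - k1) *
        Lor f (omg l1 l2 k - omg l1 l2 k1 - omg l1 l2 (k - k1)) k k1 (k - k1)
        ≤ ‖k‖ / (2 * M0 f) := by
    intro k1
    have := key_lorentz (M0 f) hM ‖k‖ ‖k1‖ ‖k - k1‖
      (omg l1 l2 k - omg l1 l2 k1 - omg l1 l2 (k - k1))
      (norm_nonneg _) (norm_nonneg _) (norm_nonneg _)
    unfold Vsq Lor Gam
    exact this
  have hbound2 : ∀ k2 : Sp d,
      Vsq (k + k2) k k2 *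
        Lor f (omg l1 l2 (k + k2) - omg l1 l2 k - omg l1 l2 k2) (k + k2) k k2
        ≤ ‖k‖ / (2 * M0 f) := by
    intro k2
    have := key_lorentz' (M0 f) hM ‖k + k2‖ ‖k‖ ‖k2‖
      (omg l1 l2 (k + k2) - omg l1 l2 k - omg l1 l2 k2)
      (norm_nonneg _) (norm_nonneg _) (norm_nonneg _)
    unfold Vsq Lor Gam
    exact this
  have hMint : ∫ k1 : Sp d, f k1 = M0 f := rfl
  -- bound on I2
  have hI2 : (∫ k1 : Sp d, Vsq k k1 (k - k1) *
      Lor f (omg l1 l2 k - omg l1 l2 k1 - omg l1 l2 (k - k1)) k k1 (k - k1) *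
      (f k * f k1)) ≤ ‖k‖ * f k / 2 := by
    have hRint : Integrable (fun k1 : Sp d => ‖k‖ / (2 * M0 f) * (f k * f k1)) :=
      (hfi.const_mul (f k)).const_mul _
    have hpt : ∀ k1 : Sp d, Vsq k k1 (k - k1) *
        Lor f (omg l1 l2 k - omg l1 l2 k1 - omg l1 l2 (k - k1)) k k1 (k - k1) *
        (f k * f k1) ≤ ‖k‖ / (2 * M0 f) * (f k * f k1) := fun k1 =>
      mul_le_mul_of_nonneg_right (hbound1 k1) (mul_nonneg (hf k) (hf k1))
    have h := integral_mono hint2 hRint hpt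
    refine h.trans ?_
    rw [integral_const_mul, integral_const_mul, hMint]
    rw [div_mul_eq_mul_div, div_le_div_iff₀ (by positivity) (by norm_num)]
    have : 0 < M0 f := hM
    nlinarith [mul_nonneg (norm_nonneg k) (hf k)]
  -- bound on I4
  have hI4 : (∫ k2 : Sp d, Vsq (k + k2) k k2 *
      Lor f (omg l1 l2 (k + k2) - omg l1 l2 k - omg l1 l2 k2) (k + k2) k k2 *
      (f k * f k2)) ≤ ‖k‖ * f k / 2 := by
    have hRint : Integrable (fun k2 : Sp d => ‖k‖ / (2 * M0 f) * (f k * f k2)) :=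
      (hfi.const_mul (f k)).const_mul _
    have hpt : ∀ k2 : Sp d, Vsq (k + k2) k k2 *
        Lor f (omg l1 l2 (k + k2) - omg l1 l2 k - omg l1 l2 k2) (k + k2) k k2 *
        (f k * f k2) ≤ ‖k‖ / (2 * M0 f) * (f k * f k2) := fun k2 =>
      mul_le_mul_of_nonneg_right (hbound2 k2) (mul_nonneg (hf k) (hf k2))
    have h := integral_mono hint4 hRint hpt
    refine h.trans ?_
    rw [integral_const_mul, integral_const_mul, hMint]
    rw [div_mul_eq_mul_div, div_le_div_iff₀ (by positivity) (by norm_num)]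
    have : 0 < M0 f := hM
    nlinarith [mul_nonneg (norm_nonneg k) (hf k)]
  -- pulling constants out
  have hI2eq : f k * (∫ k1 : Sp d, Vsq k k1 (k - k1) *
      Lor f (omg l1 l2 k - omg l1 l2 k1 - omg l1 l2 (k - k1)) k k1 (k - k1) * f k1)
      = ∫ k1 : Sp d, Vsq k k1 (k - k1) *
      Lor f (omg l1 l2 k - omg l1 l2 k1 - omg l1 l2 (k - k1)) k k1 (k - k1) *
      (f k * f k1) := by
    rw [← integral_const_mul]; congr 1; funext k1; ring
  have hI4eq : f k * (∫ k2 : Sp d, Vsq (k + k2) k k2 *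
      Lor f (omg l1 l2 (k + k2) - omg l1 l2 k - omg l1 l2 k2) (k + k2) k k2 * f k2)
      = ∫ k2 : Sp d, Vsq (k + k2) k k2 *
      Lor f (omg l1 l2 (k + k2) - omg l1 l2 k - omg l1 l2 k2) (k + k2) k k2 *
      (f k * f k2) := by
    rw [← integral_const_mul]; congr 1; funext k2; ring
  -- Qloss in terms of the two integrals
  have hQloss : Qloss l1 l2 f k
      = 2 * (∫ k1 : Sp d, Vsq k k1 (k - k1) *
          Lor f (omg l1 l2 k - omg l1 l2 k1 - omg l1 l2 (k - k1)) k k1 (k - k1) *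
          (f k * f k1))
        + 2 * (∫ k2 : Sp d, Vsq (k + k2) k k2 *
          Lor f (omg l1 l2 (k + k2) - omg l1 l2 k - omg l1 l2 k2) (k + k2) k k2 *
          (f k * f k2)) := by
    unfold Qloss vartheta
    rw [← hI2eq, ← hI4eq]; ring
  have hpart1 : Qloss l1 l2 f k ≤ 4 * ‖k‖ * f k := by
    rw [hQloss]
    nlinarith [mul_nonneg (norm_nonneg k) (hf k)]
  -- substitution k1 ↦ k - k1
  have hsubst : (∫ k1 : Sp d, Vsq k k1 (k - k1) *
      Lor f (omg l1 l2 k - omg l1 l2 k1 - omg l1 l2 (k - k1)) k k1 (k - k1) *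
      (f k * f (k - k1)))
      = ∫ k1 : Sp d, Vsq k k1 (k - k1) *
      Lor f (omg l1 l2 k - omg l1 l2 k1 - omg l1 l2 (k - k1)) k k1 (k - k1) *
      (f k * f k1) := by
    have h := MeasureTheory.integral_sub_left_eq_self
      (fun k1 : Sp d => Vsq k k1 (k - k1) *
        Lor f (omg l1 l2 k - omg l1 l2 k1 - omg l1 l2 (k - k1)) k k1 (k - k1) *
        (f k * f k1)) volume k
    rw [← h]; congr 1; funext k1
    simp only [sub_sub_cancel]
    unfold Vsq Lor Gam
    ring
  -- splitting the integrals in Qop and Qgain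
  have hsplit1 : (∫ k1 : Sp d, Vsq k k1 (k - k1) *
      Lor f (omg l1 l2 k - omg l1 l2 k1 - omg l1 l2 (k - k1)) k k1 (k - k1) *
      (f k1 * f (k - k1) - f k * f k1 - f k * f (k - k1)))
      = (∫ k1 : Sp d, Vsq k k1 (k - k1) *
          Lor f (omg l1 l2 k - omg l1 l2 k1 - omg l1 l2 (k - k1)) k k1 (k - k1) *
          (f k1 * f (k - k1)))
        - (∫ k1 : Sp d, Vsq k k1 (k - k1) *
          Lor f (omg l1 l2 k - omg l1 l2 k1 - omg l1 l2 (k - k1)) k k1 (k - k1) *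
          (f k * f k1))
        - (∫ k1 : Sp d, Vsq k k1 (k - k1) *
          Lor f (omg l1 l2 k - omg l1 l2 k1 - omg l1 l2 (k - k1)) k k1 (k - k1) *
          (f k * f (k - k1))) := by
    have e : (fun k1 : Sp d => Vsq k k1 (k - k1) *
        Lor f (omg l1 l2 k - omg l1 l2 k1 - omg l1 l2 (k - k1)) k k1 (k - k1) *
        (f k1 * f (k - k1) - f k * f k1 - f k * f (k - k1)))
        = fun k1 : Sp d => (Vsq k k1 (k - k1) *
        Lor f (omg l1 l2 k - omg l1 l2 k1 - omg l1 l2 (k - k1)) k k1 (k - k1) *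
        (f k1 * f (k - k1)) - Vsq k k1 (k - k1) *
        Lor f (omg l1 l2 k - omg l1 l2 k1 - omg l1 l2 (k - k1)) k k1 (k - k1) *
        (f k * f k1)) - Vsq k k1 (k - k1) *
        Lor f (omg l1 l2 k - omg l1 l2 k1 - omg l1 l2 (k - k1)) k k1 (k - k1) *
        (f k * f (k - k1)) := by
      funext k1; ring
    have h12 : Integrable (fun k1 : Sp d => Vsq k k1 (k - k1) *
        Lor f (omg l1 l2 k - omg l1 l2 k1 - omg l1 l2 (k - k1)) k k1 (k - k1) *
        (f k1 * f (k - k1)) - Vsq k k1 (k - k1) *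
        Lor f (omg l1 l2 k - omg l1 l2 k1 - omg l1 l2 (k - k1)) k k1 (k - k1) *
        (f k * f k1)) := hint1.sub hint2
    rw [e, integral_sub h12 hint3, integral_sub hint1 hint2]
  have hsplit2 : (∫ k2 : Sp d, Vsq (k + k2) k k2 *
      Lor f (omg l1 l2 (k + k2) - omg l1 l2 k - omg l1 l2 k2) (k + k2) k k2 *
      (f k * f k2 - f k * f (k + k2) - f (k + k2) * f k2))
      = (∫ k2 : Sp d, Vsq (k + k2) k k2 *
          Lor f (omg l1 l2 (k + k2) - omg l1 l2 k - omg l1 l2 k2) (k + k2) k k2 *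
          (f k * f k2))
        - (∫ k2 : Sp d, Vsq (k + k2) k k2 *
          Lor f (omg l1 l2 (k + k2) - omg l1 l2 k - omg l1 l2 k2) (k + k2) k k2 *
          (f k * f (k + k2)))
        - (∫ k2 : Sp d, Vsq (k + k2) k k2 *
          Lor f (omg l1 l2 (k + k2) - omg l1 l2 k - omg l1 l2 k2) (k + k2) k k2 *
          (f (k + k2) * f k2)) := by
    have e : (fun k2 : Sp d => Vsq (k + k2) k k2 *
        Lor f (omg l1 l2 (k + k2) - omg l1 l2 k - omg l1 l2 k2) (k + k2) k k2 *
        (f k * f k2 - f k * f (k + k2) - f (k + k2) * f k2))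
        = fun k2 : Sp d => (Vsq (k + k2) k k2 *
        Lor f (omg l1 l2 (k + k2) - omg l1 l2 k - omg l1 l2 k2) (k + k2) k k2 *
        (f k * f k2) - Vsq (k + k2) k k2 *
        Lor f (omg l1 l2 (k + k2) - omg l1 l2 k - omg l1 l2 k2) (k + k2) k k2 *
        (f k * f (k + k2))) - Vsq (k + k2) k k2 *
        Lor f (omg l1 l2 (k + k2) - omg l1 l2 k - omg l1 l2 k2) (k + k2) k k2 *
        (f (k + k2) * f k2) := by
      funext k2; ring
    have h45 : Integrable (fun k2 : Sp d => Vsq (k + k2) k k2 *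
        Lor f (omg l1 l2 (k + k2) - omg l1 l2 k - omg l1 l2 k2) (k + k2) k k2 *
        (f k * f k2) - Vsq (k + k2) k k2 *
        Lor f (omg l1 l2 (k + k2) - omg l1 l2 k - omg l1 l2 k2) (k + k2) k k2 *
        (f k * f (k + k2))) := hint4.sub hint5
    rw [e, integral_sub h45 hint6, integral_sub hint4 hint5]
  have hgain2 : (∫ k2 : Sp d, Vsq (k + k2) k k2 *
      Lor f (omg l1 l2 (k + k2) - omg l1 l2 k - omg l1 l2 k2) (k + k2) k k2 *
      (f k * f (k + k2) + f (k + k2) * f k2))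
      = (∫ k2 : Sp d, Vsq (k + k2) k k2 *
          Lor f (omg l1 l2 (k + k2) - omg l1 l2 k - omg l1 l2 k2) (k + k2) k k2 *
          (f k * f (k + k2)))
        + (∫ k2 : Sp d, Vsq (k + k2) k k2 *
          Lor f (omg l1 l2 (k + k2) - omg l1 l2 k - omg l1 l2 k2) (k + k2) k k2 *
          (f (k + k2) * f k2)) := by
    have e : (fun k2 : Sp d => Vsq (k + k2) k k2 *
        Lor f (omg l1 l2 (k + k2) - omg l1 l2 k - omg l1 l2 k2) (k + k2) k k2 *
        (f k * f (k + k2) + f (k + k2) * f k2))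
        = fun k2 : Sp d => Vsq (k + k2) k k2 *
        Lor f (omg l1 l2 (k + k2) - omg l1 l2 k - omg l1 l2 k2) (k + k2) k k2 *
        (f k * f (k + k2)) + Vsq (k + k2) k k2 *
        Lor f (omg l1 l2 (k + k2) - omg l1 l2 k - omg l1 l2 k2) (k + k2) k k2 *
        (f (k + k2) * f k2) := by
      funext k2; ring
    rw [e, integral_add hint5 hint6]
  have hEq : Qop l1 l2 f k = Qgain l1 l2 f k - Qloss l1 l2 f k := by
    unfold Qop Qgain
    rw [hsplit1, hsplit2, hgain2, hQloss, hsubst]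
    ring
  have hQg : 0 ≤ Qgain l1 l2 f k := by
    unfold Qgain
    have h1 : 0 ≤ ∫ k1 : Sp d, Vsq k k1 (k - k1) *
        Lor f (omg l1 l2 k - omg l1 l2 k1 - omg l1 l2 (k - k1)) k k1 (k - k1) *
        (f k1 * f (k - k1)) :=
      integral_nonneg fun k1 => mul_nonneg (mul_nonneg (hVnn _ _ _) (hLnn _ _ _ _))
        (mul_nonneg (hf _) (hf _))
    have h2 : 0 ≤ ∫ k2 : Sp d, Vsq (k + k2) k k2 *
        Lor f (omg l1 l2 (k + k2) - omg l1 l2 k - omg l1 l2 k2) (k + k2) k k2 *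
        (f k * f (k + k2) + f (k + k2) * f k2) :=
      integral_nonneg fun k2 => mul_nonneg (mul_nonneg (hVnn _ _ _) (hLnn _ _ _ _))
        (add_nonneg (mul_nonneg (hf _) (hf _)) (mul_nonneg (hf _) (hf _)))
    linarith
  exact ⟨hpart1, hEq, by rw [hEq]; linarith⟩
end
end

section
/- Exponential lower bound on solutions: let ν > 0, let f0 ≥ 0 be integrable on ℝ^d, and let f be a nonnegative, integrable strong solution of ∂_t f = Q[f] − 2ν|k|²f with f(0,·) = f0. Then for all t ≥ 0 and all k ∈ ℝ^d, f(t,k) ≥ f0(k) e^{−(2ν|k|² + 4|k|)t}. Consequently, for every R0 > 0, ‖f(t,·)·χ_{R0}‖_{L¹} ≥ e^{−(2νR0² + 4R0)t} ‖f0·χ_{R0}‖_{L¹}, where χ_{R0} is the indicator of the ball of radius R0 centered at the origin of ℝ^d. -/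
noncomputable section
open MeasureTheory Filter Set Real

/-- Kernel of the first (k = k1 + k2) family of collision integrals. -/
def Kern1 (l1 l2 : ℝ) {d : ℕ} (f : Sp d → ℝ) (k k1 : Sp d) : ℝ :=
  Vsq k k1 (k - k1) *
    Lor f (omg l1 l2 k - omg l1 l2 k1 - omg l1 l2 (k - k1)) k k1 (k - k1)

/-- Kernel of the second (k1 = k + k2) family of collision integrals. -/
def Kern2 (l1 l2 : ℝ) {d : ℕ} (f : Sp d → ℝ) (k k2 : Sp d) : ℝ :=
  Vsq (k + k2) k k2 *
    Lor f (omg l1 l2 (k + k2) - omg l1 l2 k - omg l1 l2 k2) (k + k2) k k2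

/-! Since the Lorentzian is at most `1/Γ` and `2|k₁||k₂| ≤ |k₁|² + |k₂|²`, both collision kernels
are bounded by `|k| / (2 𝔐₀[f])`. Each loss integral is `f(k)` times such a kernel integrated
against a translate of `f`, whose mass is `𝔐₀[f]`; the gain terms are nonnegative, so
`Q[f](k) ≥ -2|k| f(k)`. Hence `∂ₜ f ≥ -(2ν|k|² + 4|k|) f`, and `f(t,k) e^{(2ν|k|² + 4|k|)t}` is
nondecreasing in `t`. Integrating over the ball gives the second bound. -/

lemma div_sq_add_sq_le_inv (z : ℝ) {Γ : ℝ} (hΓ : 0 ≤ Γ) : Γ / (z ^ 2 + Γ ^ 2) ≤ Γ⁻¹ := by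
  rcases hΓ.eq_or_lt with rfl | hΓ
  · simp
  rw [div_le_iff₀ (by positivity), inv_mul_eq_div, le_div_iff₀ hΓ]
  nlinarith [sq_nonneg z]

section Kernels

variable {d : ℕ} {g : Sp d → ℝ}

lemma M0_nonneg (hg : ∀ x, 0 ≤ g x) : 0 ≤ M0 g :=
  integral_nonneg hg

lemma Vsq_nonneg (a b c : Sp d) : 0 ≤ Vsq a b c := by
  unfold Vsq; positivity

lemma Gam_nonneg (hg : 0 ≤ M0 g) (a b c : Sp d) : 0 ≤ Gam g a b c := by
  unfold Gam; positivity

lemma Lor_nonneg (hg : 0 ≤ M0 g) (z : ℝ) (a b c : Sp d) : 0 ≤ Lor g z a b c :=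
  div_nonneg (Gam_nonneg hg a b c) (by positivity)

lemma Vsq_mul_Lor_le (hg : 0 ≤ M0 g) (z : ℝ) (a b c : Sp d) :
    Vsq a b c * Lor g z a b c ≤ ‖a‖ / (2 * M0 g) := by
  calc Vsq a b c * Lor g z a b c ≤ Vsq a b c * (Gam g a b c)⁻¹ :=
        mul_le_mul_of_nonneg_left (div_sq_add_sq_le_inv z (Gam_nonneg hg a b c)) (Vsq_nonneg a b c)
    _ ≤ ‖a‖ / (2 * M0 g) := by
        rcases (Gam_nonneg hg a b c).eq_or_lt with hΓ | hΓ
        · rw [← hΓ, inv_zero, mul_zero]; positivity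
        have hM : 0 < M0 g := pos_of_mul_pos_right hΓ (by positivity)
        rw [← div_eq_mul_inv, div_le_div_iff₀ hΓ (by positivity)]
        unfold Vsq Gam
        have hbc : 2 * (‖b‖ * ‖c‖) ≤ ‖a‖ ^ 2 + ‖b‖ ^ 2 + ‖c‖ ^ 2 := by
          nlinarith [sq_nonneg (‖b‖ - ‖c‖), sq_nonneg ‖a‖]
        nlinarith [mul_le_mul_of_nonneg_left hbc (mul_nonneg (norm_nonneg a) hM.le)]

variable (l1 l2 : ℝ)

lemma Kern1_nonneg (hg : 0 ≤ M0 g) (k k1 : Sp d) : 0 ≤ Kern1 l1 l2 g k k1 :=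
  mul_nonneg (Vsq_nonneg _ _ _) (Lor_nonneg hg _ _ _ _)

lemma Kern2_nonneg (hg : 0 ≤ M0 g) (k k2 : Sp d) : 0 ≤ Kern2 l1 l2 g k k2 :=
  mul_nonneg (Vsq_nonneg _ _ _) (Lor_nonneg hg _ _ _ _)

lemma Kern1_le (hg : 0 ≤ M0 g) (k k1 : Sp d) : Kern1 l1 l2 g k k1 ≤ ‖k‖ / (2 * M0 g) :=
  Vsq_mul_Lor_le hg _ _ _ _

lemma Kern2_le (hg : 0 ≤ M0 g) (k k2 : Sp d) : Kern2 l1 l2 g k k2 ≤ ‖k‖ / (2 * M0 g) := by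
  calc Kern2 l1 l2 g k k2
      = Vsq k (k + k2) k2 *
          Lor g (omg l1 l2 (k + k2) - omg l1 l2 k - omg l1 l2 k2) k (k + k2) k2 := by
        simp only [Kern2, Vsq, Lor, Gam]; ring
    _ ≤ ‖k‖ / (2 * M0 g) := Vsq_mul_Lor_le hg _ _ _ _

end Kernels

lemma integral_mul_le_of_le_div_integral {α : Type*} [MeasurableSpace α] {μ : Measure α}
    {K φ : α → ℝ} {a B : ℝ} (ha : 0 ≤ a) (hB : 0 ≤ B) (hφ : ∀ x, 0 ≤ φ x)
    (hφi : Integrable φ μ) (hKφ : Integrable (fun x => K x * (a * φ x)) μ)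
    (hK : ∀ x, K x ≤ B / (2 * ∫ x, φ x ∂μ)) :
    ∫ x, K x * (a * φ x) ∂μ ≤ B * a / 2 := by
  calc ∫ x, K x * (a * φ x) ∂μ ≤ ∫ x, B / (2 * ∫ x, φ x ∂μ) * a * φ x ∂μ := by
        refine integral_mono hKφ (hφi.const_mul _) fun x => ?_
        rw [mul_assoc]
        exact mul_le_mul_of_nonneg_right (hK x) (mul_nonneg ha (hφ x))
    _ = B / (2 * ∫ x, φ x ∂μ) * a * ∫ x, φ x ∂μ := integral_const_mul _ _
    _ ≤ B * a / 2 := by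
        rcases (integral_nonneg hφ : 0 ≤ ∫ x, φ x ∂μ).eq_or_lt with hI | hI
        · rw [← hI, mul_zero]; positivity
        · exact (by field_simp : B / (2 * ∫ x, φ x ∂μ) * a * ∫ x, φ x ∂μ = B * a / 2).le

section Collision

variable (l1 l2 : ℝ) {d : ℕ} (F : Sp d → ℝ) (k : Sp d)

def CollisionIntegrable : Prop :=
  Integrable (fun k1 => Kern1 l1 l2 F k k1 * (F k1 * F (k - k1))) ∧
  Integrable (fun k1 => Kern1 l1 l2 F k k1 * (F k * F k1)) ∧
  Integrable (fun k1 => Kern1 l1 l2 F k k1 * (F k * F (k - k1))) ∧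
  Integrable (fun k2 => Kern2 l1 l2 F k k2 * (F k * F k2)) ∧
  Integrable (fun k2 => Kern2 l1 l2 F k k2 * (F k * F (k + k2))) ∧
  Integrable (fun k2 => Kern2 l1 l2 F k k2 * (F (k + k2) * F k2))

variable {l1 l2 F k}

lemma Qop_eq_gain_sub_loss (h : CollisionIntegrable l1 l2 F k) :
    Qop l1 l2 F k =
      (∫ k1, Kern1 l1 l2 F k k1 * (F k1 * F (k - k1)))
        - (∫ k1, Kern1 l1 l2 F k k1 * (F k * F k1))
        - (∫ k1, Kern1 l1 l2 F k k1 * (F k * F (k - k1)))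
      - 2 * ((∫ k2, Kern2 l1 l2 F k k2 * (F k * F k2))
        - (∫ k2, Kern2 l1 l2 F k k2 * (F k * F (k + k2)))
        - (∫ k2, Kern2 l1 l2 F k k2 * (F (k + k2) * F k2))) := by
  obtain ⟨h1, h2, h3, h4, h5, h6⟩ := h
  have hsplit1 := integral_sub (h1.sub h2) h3
  have hsplit2 := integral_sub (h4.sub h5) h6
  simp only [Pi.sub_apply] at hsplit1 hsplit2
  rw [integral_sub h1 h2] at hsplit1
  rw [integral_sub h4 h5] at hsplit2
  rw [← hsplit1, ← hsplit2, Qop]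
  simp only [Kern1, Kern2, mul_sub]

lemma neg_two_mul_norm_mul_le_Qop (hF : ∀ x, 0 ≤ F x) (hFi : Integrable F)
    (h : CollisionIntegrable l1 l2 F k) : -(2 * ‖k‖ * F k) ≤ Qop l1 l2 F k := by
  have hM := M0_nonneg hF
  rw [Qop_eq_gain_sub_loss h]
  obtain ⟨-, h2, h3, h4, -, -⟩ := h
  have hloss1 : ∫ k1, Kern1 l1 l2 F k k1 * (F k * F k1) ≤ ‖k‖ * F k / 2 :=
    integral_mul_le_of_le_div_integral (hF k) (norm_nonneg k) hF hFi h2 (Kern1_le l1 l2 hM k)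
  have hloss2 : ∫ k1, Kern1 l1 l2 F k k1 * (F k * F (k - k1)) ≤ ‖k‖ * F k / 2 := by
    refine integral_mul_le_of_le_div_integral (hF k) (norm_nonneg k) (fun _ => hF _)
      (hFi.comp_sub_left k) h3 fun k1 => ?_
    rw [integral_sub_left_eq_self F volume k]
    exact Kern1_le l1 l2 hM k k1
  have hloss3 : ∫ k2, Kern2 l1 l2 F k k2 * (F k * F k2) ≤ ‖k‖ * F k / 2 :=
    integral_mul_le_of_le_div_integral (hF k) (norm_nonneg k) hF hFi h4 (Kern2_le l1 l2 hM k)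
  have hgain1 : 0 ≤ ∫ k1, Kern1 l1 l2 F k k1 * (F k1 * F (k - k1)) :=
    integral_nonneg fun k1 => mul_nonneg (Kern1_nonneg l1 l2 hM k k1) (mul_nonneg (hF _) (hF _))
  have hgain2 : 0 ≤ ∫ k2, Kern2 l1 l2 F k k2 * (F k * F (k + k2)) :=
    integral_nonneg fun k2 => mul_nonneg (Kern2_nonneg l1 l2 hM k k2) (mul_nonneg (hF _) (hF _))
  have hgain3 : 0 ≤ ∫ k2, Kern2 l1 l2 F k k2 * (F (k + k2) * F k2) :=
    integral_nonneg fun k2 => mul_nonneg (Kern2_nonneg l1 l2 hM k k2) (mul_nonneg (hF _) (hF _))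
  linarith

end Collision

lemma mul_exp_le_of_hasDerivAt {u u' : ℝ → ℝ} {c t : ℝ} (hu : ∀ s, HasDerivAt u (u' s) s)
    (hu' : ∀ s, -c * u s ≤ u' s) (ht : 0 ≤ t) : u 0 * exp (-c * t) ≤ u t := by
  have hder : ∀ s, HasDerivAt (fun s => u s * exp (c * s))
      (u' s * exp (c * s) + u s * (exp (c * s) * c)) s := fun s =>
    (hu s).mul (by simpa using ((hasDerivAt_id s).const_mul c).exp)
  have hmono : Monotone fun s => u s * exp (c * s) := by
    refine monotone_of_deriv_nonneg (fun s => (hder s).differentiableAt) fun s => ?_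
    rw [(hder s).deriv]
    nlinarith [mul_le_mul_of_nonneg_right (hu' s) (exp_pos (c * s)).le]
  have h0t := hmono ht
  simp only [mul_zero, exp_zero, mul_one] at h0t
  rwa [neg_mul, exp_neg, ← div_eq_mul_inv, div_le_iff₀ (exp_pos _)]

lemma exp_mul_integral_indicator_le {α : Type*} [MeasurableSpace α] {μ : Measure α} {s : Set α}
    (hs : MeasurableSet s) {g₀ g w : α → ℝ} {W t : ℝ} (ht : 0 ≤ t) (hg₀ : ∀ x, 0 ≤ g₀ x)
    (hgi : Integrable g μ) (hw : ∀ x ∈ s, w x ≤ W) (h : ∀ x, g₀ x * exp (-w x * t) ≤ g x) :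
    exp (-W * t) * ∫ x, s.indicator g₀ x ∂μ ≤ ∫ x, s.indicator g x ∂μ := by
  rw [← integral_const_mul]
  refine integral_mono_of_nonneg (ae_of_all _ fun x => ?_) (hgi.indicator hs)
    (ae_of_all _ fun x => ?_)
  · exact mul_nonneg (exp_pos _).le (indicator_nonneg (fun x _ => hg₀ x) x)
  by_cases hx : x ∈ s
  · simp only [indicator_of_mem hx]
    calc exp (-W * t) * g₀ x ≤ exp (-w x * t) * g₀ x := by
          gcongr
          · exact hg₀ x
          · nlinarith [hw x hx]
      _ ≤ g x := by rw [mul_comm]; exact h x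
  · simp [indicator_of_notMem hx]

theorem solution_exponential_lower_bound_general {d : ℕ} (l1 l2 ν : ℝ)
    (hν : 0 < ν)
    (f0 : Sp d → ℝ) (hf0 : ∀ k, 0 ≤ f0 k)
    (f : ℝ → Sp d → ℝ) (hinit : f 0 = f0)
    (hpos : ∀ t k, 0 ≤ f t k) (hint : ∀ t, Integrable (f t))
    (hsol : ∀ t k, HasDerivAt (fun s => f s k)
      (Qop l1 l2 (f t) k - 2 * ν * ‖k‖ ^ 2 * f t k) t)
    (hreg : ∀ t (k : Sp d),
      Integrable (fun k1 => Kern1 l1 l2 (f t) k k1 * (f t k1 * f t (k - k1))) ∧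
      Integrable (fun k1 => Kern1 l1 l2 (f t) k k1 * (f t k * f t k1)) ∧
      Integrable (fun k1 => Kern1 l1 l2 (f t) k k1 * (f t k * f t (k - k1))) ∧
      Integrable (fun k2 => Kern2 l1 l2 (f t) k k2 * (f t k * f t k2)) ∧
      Integrable (fun k2 => Kern2 l1 l2 (f t) k k2 * (f t k * f t (k + k2))) ∧
      Integrable (fun k2 => Kern2 l1 l2 (f t) k k2 * (f t (k + k2) * f t k2))) :
    (∀ t : ℝ, 0 ≤ t → ∀ k : Sp d,
      f0 k * Real.exp (-(2 * ν * ‖k‖ ^ 2 + 4 * ‖k‖) * t) ≤ f t k) ∧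
    ∀ R0 : ℝ, 0 < R0 → ∀ t : ℝ, 0 ≤ t →
      Real.exp (-(2 * ν * R0 ^ 2 + 4 * R0) * t) *
          (∫ k, Set.indicator (Metric.ball (0 : Sp d) R0) f0 k) ≤
        ∫ k, Set.indicator (Metric.ball (0 : Sp d) R0) (f t) k := by
  have hpointwise : ∀ t : ℝ, 0 ≤ t → ∀ k : Sp d,
      f0 k * Real.exp (-(2 * ν * ‖k‖ ^ 2 + 4 * ‖k‖) * t) ≤ f t k := by
    intro t ht k
    rw [← hinit]
    refine mul_exp_le_of_hasDerivAt (hsol · k) (fun s => ?_) ht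
    have hQ := neg_two_mul_norm_mul_le_Qop (hpos s) (hint s) (hreg s k)
    nlinarith [mul_nonneg (norm_nonneg k) (hpos s k)]
  refine ⟨hpointwise, fun R0 _ t ht =>
    exp_mul_integral_indicator_le measurableSet_ball ht hf0 (hint t) (fun k hk => ?_)
      (hpointwise t ht)⟩
  have hkR : ‖k‖ ≤ R0 := (mem_ball_zero_iff.mp hk).le
  have hk2 : ‖k‖ ^ 2 ≤ R0 ^ 2 := pow_le_pow_left₀ (norm_nonneg k) hkR 2
  nlinarith

/-- Exponential lower bound on solutions: if f is a nonnegative integrable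
strong solution of ∂_t f = Q[f] − 2ν|k|²f with f(0,·) = f0 ≥ 0 integrable, then
f(t,k) ≥ f0(k)·e^{−(2ν|k|²+4|k|)t} for all t ≥ 0, k; consequently for every R0 > 0,
‖f(t)·χ_{R0}‖_{L¹} ≥ e^{−(2νR0²+4R0)t}·‖f0·χ_{R0}‖_{L¹}. -/
theorem solution_exponential_lower_bound {d : ℕ} (hd : 2 ≤ d) (l1 l2 ν : ℝ)
    (hl1 : 0 < l1) (hl2 : 0 < l2) (hν : 0 < ν)
    (f0 : Sp d → ℝ) (hf0 : ∀ k, 0 ≤ f0 k) (hf0i : Integrable f0)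
    (f : ℝ → Sp d → ℝ) (hinit : f 0 = f0)
    (hpos : ∀ t k, 0 ≤ f t k) (hint : ∀ t, Integrable (f t))
    (hsol : ∀ t k, HasDerivAt (fun s => f s k)
      (Qop l1 l2 (f t) k - 2 * ν * ‖k‖ ^ 2 * f t k) t)
    (hreg : ∀ t (k : Sp d),
      Integrable (fun k1 => Kern1 l1 l2 (f t) k k1 * (f t k1 * f t (k - k1))) ∧
      Integrable (fun k1 => Kern1 l1 l2 (f t) k k1 * (f t k * f t k1)) ∧
      Integrable (fun k1 => Kern1 l1 l2 (f t) k k1 * (f t k * f t (k - k1))) ∧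
      Integrable (fun k2 => Kern2 l1 l2 (f t) k k2 * (f t k * f t k2)) ∧
      Integrable (fun k2 => Kern2 l1 l2 (f t) k k2 * (f t k * f t (k + k2))) ∧
      Integrable (fun k2 => Kern2 l1 l2 (f t) k k2 * (f t (k + k2) * f t k2))) :
    (∀ t : ℝ, 0 ≤ t → ∀ k : Sp d,
      f0 k * Real.exp (-(2 * ν * ‖k‖ ^ 2 + 4 * ‖k‖) * t) ≤ f t k) ∧
    ∀ R0 : ℝ, 0 < R0 → ∀ t : ℝ, 0 ≤ t →
      Real.exp (-(2 * ν * R0 ^ 2 + 4 * R0) * t) *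
          (∫ k, Set.indicator (Metric.ball (0 : Sp d) R0) f0 k) ≤
        ∫ k, Set.indicator (Metric.ball (0 : Sp d) R0) (f t) k :=
  solution_exponential_lower_bound_general l1 l2 ν hν f0 hf0 f hinit hpos hint hsol hreg
end
end
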